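/- Let A be a subset of an abelian group with |A| = k sufficiently large. Then A contains a subset C with |C| ≥ k/8 and |C +̂ C| ≥ 7|C|. -/

import Mathlib

/-!
If `|A +̂ A| ≥ 7|A|`, take `C = A`. Otherwise the `|A|(|A| - 1)` ordered representations
`s = x + y`, `x ≠ y`, fall on fewer than `7|A|` sums, each with at most `|A|` representations,
so at least `|A| - O(1)` sums are popular: they have at least `4096` representations. The
representations of `s` come in pairs `{x, s - x}`, any two of which are equal or disjoint, and a
second-moment estimate over the `m`-element subsets `C ⊆ A`, `m = ⌈|A|/8⌉`, shows that a popular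
sum lies in `C +̂ C` for at least `15/16` of them. Averaging over `C` gives
`|C +̂ C| ≥ 15/16 (|A| - O(1)) ≥ 7m`.
-/

/-- The restricted sumset `X +̂ X = {x + y : x, y ∈ X, x ≠ y}`. -/
def hatAdd {G : Type*} [AddCommGroup G] [DecidableEq G] (X : Finset G) : Finset G :=
  ((X ×ˢ X).filter fun p => p.1 ≠ p.2).image fun p => p.1 + p.2

universe u

open Finset

theorem Nat.choose_mul_mul_sub_one {k m : ℕ} (hm : 2 ≤ m) :
    k.choose m * (m * (m - 1)) = k * (k - 1) * (k - 2).choose (m - 2) := by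
  have h := Nat.choose_mul (n := k) (k := m) (s := 2) hm
  have two_dvd (n : ℕ) : 2 ∣ n * (n - 1) := (Nat.even_mul_pred_self n).two_dvd
  rw [Nat.choose_two_right, Nat.choose_two_right] at h
  rw [← Nat.div_mul_cancel (two_dvd m), ← Nat.div_mul_cancel (two_dvd k), ← mul_assoc, h]
  ring

theorem Nat.choose_mul_choose_sub_four_le_sq {k m : ℕ} (hm : 4 ≤ m) (hmk : m ≤ k) :
    k.choose m * (k - 4).choose (m - 4) ≤ (k - 2).choose (m - 2) ^ 2 := by
  have h₁ := Nat.choose_mul_mul_sub_one (k := k) (show 2 ≤ m by omega)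
  have h₂ := Nat.choose_mul_mul_sub_one (k := k - 2) (show 2 ≤ m - 2 by omega)
  rw [show k - 2 - 2 = k - 4 by omega, show m - 2 - 2 = m - 4 by omega,
    show k - 2 - 1 = k - 3 by omega, show m - 2 - 1 = m - 3 by omega] at h₂
  have ratio : k * (k - 1) * ((m - 2) * (m - 3)) ≤ m * (m - 1) * ((k - 2) * (k - 3)) := by
    have hkm : (0 : ℤ) ≤ (k - m) * (4 * m * k - 6 * k - 6 * m + 6) := by
      apply mul_nonneg <;> nlinarith
    zify [show 3 ≤ k by omega, show 1 ≤ k by omega, show 2 ≤ k by omega, show 1 ≤ m by omega,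
      show 2 ≤ m by omega, show 3 ≤ m by omega]
    nlinarith
  have hpos : 0 < m * (m - 1) * ((k - 2) * (k - 3)) := by
    apply_rules [Nat.mul_pos] <;> omega
  refine Nat.le_of_mul_le_mul_right ?_ hpos
  calc k.choose m * (k - 4).choose (m - 4) * (m * (m - 1) * ((k - 2) * (k - 3)))
      = k.choose m * (m * (m - 1)) * ((k - 2) * (k - 3) * (k - 4).choose (m - 4)) := by ring
    _ = (k - 2).choose (m - 2) ^ 2 * (k * (k - 1) * ((m - 2) * (m - 3))) := by
      rw [h₁, ← h₂]; ring
    _ ≤ _ := Nat.mul_le_mul_left _ ratio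

theorem card_filter_eq_zero_mul_sq_add_le {ι : Type*} (s : Finset ι) (X : ι → ℕ) :
    #{i ∈ s | X i = 0} * (∑ i ∈ s, X i) ^ 2 + #s * (∑ i ∈ s, X i) ^ 2 ≤
      #s ^ 2 * ∑ i ∈ s, X i ^ 2 := by
  set S : ℤ := ∑ i ∈ s, (X i : ℤ)
  suffices (#{i ∈ s | X i = 0} : ℤ) * S ^ 2 + #s * S ^ 2 ≤ #s ^ 2 * ∑ i ∈ s, (X i : ℤ) ^ 2 by
    simp only [S] at this
    exact_mod_cast this
  have expand : ∑ i ∈ s, ((#s : ℤ) * X i - S) ^ 2 =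
      #s ^ 2 * ∑ i ∈ s, (X i : ℤ) ^ 2 - #s * S ^ 2 := by
    simp only [sub_sq, sum_add_distrib, sum_sub_distrib, mul_pow, ← mul_sum, ← sum_mul,
      sum_const, nsmul_eq_mul, S]
    ring
  have zeros : (#{i ∈ s | X i = 0} : ℤ) * S ^ 2 ≤ ∑ i ∈ s, ((#s : ℤ) * X i - S) ^ 2 := by
    calc (#{i ∈ s | X i = 0} : ℤ) * S ^ 2 = ∑ i ∈ s with X i = 0, ((#s : ℤ) * X i - S) ^ 2 := by
          rw [sum_congr rfl fun i hi => by rw [(mem_filter.1 hi).2]]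
          simp
      _ ≤ _ := sum_le_sum_of_subset_of_nonneg (filter_subset _ _) fun _ _ _ => sq_nonneg _
  linarith

theorem exists_mul_card_le_mul_card {ι β : Type*} [DecidableEq β] {𝒜 : Finset ι}
    (h𝒜 : 𝒜.Nonempty) (F : ι → Finset β) (S : Finset β) {p q : ℕ}
    (hS : ∀ b ∈ S, p * #𝒜 ≤ q * #{C ∈ 𝒜 | b ∈ F C}) : ∃ C ∈ 𝒜, p * #S ≤ q * #(F C) := by
  have double_count : ∑ C ∈ 𝒜, p * #S ≤ ∑ C ∈ 𝒜, q * #(S ∩ F C) :=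
    calc ∑ C ∈ 𝒜, p * #S = ∑ b ∈ S, p * #𝒜 := by simp only [sum_const, smul_eq_mul]; ring
      _ ≤ ∑ b ∈ S, q * #{C ∈ 𝒜 | b ∈ F C} := sum_le_sum hS
      _ = ∑ C ∈ 𝒜, q * #(S ∩ F C) := by
        simp only [← mul_sum, ← filter_mem_eq_inter, card_filter]
        rw [sum_comm]
  obtain ⟨C, hC, h⟩ := exists_le_of_sum_le h𝒜 double_count
  exact ⟨C, hC, h.trans (Nat.mul_le_mul_left _ (card_le_card inter_subset_right))⟩

section RestrictedSumset

variable {G : Type*} [AddCommGroup G] [DecidableEq G]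

theorem mem_hatAdd {X : Finset G} {s : G} :
    s ∈ hatAdd X ↔ ∃ x ∈ X, ∃ y ∈ X, x ≠ y ∧ x + y = s := by
  simp [hatAdd, and_assoc]

/-- `x` stands for the ordered representation `s = x + (s - x)`. -/
def hatAddReps (A : Finset G) (s : G) : Finset G :=
  {x ∈ A | s - x ∈ A ∧ s - x ≠ x}

@[simp]
theorem mem_hatAddReps {A : Finset G} {s x : G} :
    x ∈ hatAddReps A s ↔ x ∈ A ∧ s - x ∈ A ∧ s - x ≠ x :=
  mem_filter

theorem mem_hatAdd_iff_nonempty_hatAddReps {A : Finset G} {s : G} :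
    s ∈ hatAdd A ↔ (hatAddReps A s).Nonempty := by
  rw [mem_hatAdd]
  constructor
  · rintro ⟨x, hx, y, hy, hxy, rfl⟩
    exact ⟨x, by simpa using ⟨hx, hy, hxy.symm⟩⟩
  · rintro ⟨x, hx⟩
    obtain ⟨hx, hsx, hne⟩ := mem_hatAddReps.1 hx
    exact ⟨x, hx, s - x, hsx, hne.symm, add_sub_cancel x s⟩

theorem sum_card_hatAddReps (A : Finset G) :
    ∑ s ∈ hatAdd A, #(hatAddReps A s) = #A.offDiag := by
  rw [card_eq_sum_card_fiberwise (f := fun p : G × G => p.1 + p.2) (t := hatAdd A)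
    fun p hp => mem_hatAdd.2 ⟨p.1, (mem_offDiag.1 hp).1, p.2, (mem_offDiag.1 hp).2.1,
      (mem_offDiag.1 hp).2.2, rfl⟩]
  refine sum_congr rfl fun s _ => ?_
  rw [← card_image_of_injective _ (fun x y h => congrArg Prod.fst h : Function.Injective
    fun x => (x, s - x))]
  congr 1
  ext ⟨x, y⟩
  simp only [mem_image, mem_hatAddReps, mem_filter, mem_offDiag, Prod.mk.injEq]
  constructor
  · rintro ⟨x, ⟨hx, hsx, hne⟩, rfl, rfl⟩
    exact ⟨⟨hx, hsx, hne.symm⟩, add_sub_cancel x s⟩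
  · rintro ⟨⟨hx, hy, hne⟩, rfl⟩
    exact ⟨x, by simpa using ⟨hx, hy, hne.symm⟩⟩

def popularSums (A : Finset G) (T : ℕ) : Finset G :=
  {s ∈ hatAdd A | T ≤ #(hatAddReps A s)}

theorem card_sub_one_le_card_popularSums_add {A : Finset G} {c : ℕ}
    (hA : #(hatAdd A) ≤ c * #A) (T : ℕ) : #A - 1 ≤ #(popularSums A T) + T * c := by
  have split : #A.offDiag ≤ #A * #(popularSums A T) + T * #(hatAdd A) := by
    rw [← sum_card_hatAddReps, ← sum_filter_add_sum_filter_not _ fun s => T ≤ #(hatAddReps A s)]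
    gcongr
    · calc ∑ s ∈ popularSums A T, #(hatAddReps A s) ≤ ∑ s ∈ popularSums A T, #A :=
            sum_le_sum fun s _ => card_le_card (filter_subset _ _)
        _ = #A * #(popularSums A T) := by rw [sum_const, smul_eq_mul, mul_comm]
    · calc _ ≤ ∑ s ∈ hatAdd A with ¬T ≤ #(hatAddReps A s), T :=
            sum_le_sum fun s hs => by have := (mem_filter.1 hs).2; omega
        _ ≤ T * #(hatAdd A) := by
            rw [sum_const, smul_eq_mul, mul_comm]; exact Nat.mul_le_mul_left _ (card_filter_le _ _)
  rcases (#A).eq_zero_or_pos with hk | hk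
  · omega
  refine Nat.le_of_mul_le_mul_left ?_ hk
  rw [offDiag_card] at split
  calc #A * (#A - 1) = #A * #A - #A := by rw [Nat.mul_sub_one]
    _ ≤ #A * #(popularSums A T) + T * (c * #A) := split.trans (by gcongr)
    _ = #A * (#(popularSums A T) + T * c) := by ring

theorem hatAddReps_of_subset {A C : Finset G} (hCA : C ⊆ A) (s : G) :
    hatAddReps C s = {x ∈ hatAddReps A s | {x, s - x} ⊆ C} := by
  ext x
  simp only [mem_hatAddReps, mem_filter, insert_subset_iff, singleton_subset_iff]
  constructor
  · rintro ⟨hx, hsx, hne⟩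
    exact ⟨⟨hCA hx, hCA hsx, hne⟩, hx, hsx⟩
  · rintro ⟨⟨-, -, hne⟩, hx, hsx⟩
    exact ⟨hx, hsx, hne⟩

section Pair

variable {A : Finset G} {s x y : G}

theorem pair_subset_of_mem_hatAddReps (hx : x ∈ hatAddReps A s) : {x, s - x} ⊆ A := by
  obtain ⟨hx, hsx, -⟩ := mem_hatAddReps.1 hx
  exact insert_subset hx (singleton_subset_iff.2 hsx)

theorem card_pair_of_mem_hatAddReps (hx : x ∈ hatAddReps A s) : #{x, s - x} = 2 :=
  card_pair (mem_hatAddReps.1 hx).2.2.symm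

theorem pair_sub_eq_of_mem (hy : y ∈ ({x, s - x} : Finset G)) :
    ({y, s - y} : Finset G) = {x, s - x} := by
  rcases mem_insert.1 hy with rfl | hy
  · rfl
  · rw [mem_singleton.1 hy, sub_sub_cancel, pair_comm]

theorem disjoint_pair_sub_of_notMem (hy : y ∉ ({x, s - x} : Finset G)) :
    Disjoint ({x, s - x} : Finset G) {y, s - y} := by
  simp only [mem_insert, mem_singleton, not_or] at hy
  simp only [disjoint_insert_left, disjoint_insert_right, disjoint_singleton, mem_insert,
    mem_singleton, not_or]
  have : x ≠ s - y := fun h => hy.2 (by rw [h, sub_sub_cancel])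
  have : s - x ≠ s - y := fun h => hy.1 (sub_right_injective h).symm
  grind

end Pair

variable (A : Finset G) (s : G) {m : ℕ}

theorem sum_card_hatAddReps_powersetCard (hm : 2 ≤ m) :
    ∑ C ∈ A.powersetCard m, #(hatAddReps C s) =
      #(hatAddReps A s) * (#A - 2).choose (m - 2) := by
  calc ∑ C ∈ A.powersetCard m, #(hatAddReps C s)
      = ∑ C ∈ A.powersetCard m, #{x ∈ hatAddReps A s | {x, s - x} ⊆ C} :=
        sum_congr rfl fun C hC => by rw [hatAddReps_of_subset (mem_powersetCard.1 hC).1]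
    _ = ∑ x ∈ hatAddReps A s, #{C ∈ A.powersetCard m | {x, s - x} ⊆ C} := by
        simp only [card_filter]; exact sum_comm
    _ = ∑ x ∈ hatAddReps A s, (#A - 2).choose (m - 2) := sum_congr rfl fun x hx => by
        rw [card_filter_powersetCard_subset _ _ _ (pair_subset_of_mem_hatAddReps hx)
          (by rw [card_pair_of_mem_hatAddReps hx]; exact hm), card_pair_of_mem_hatAddReps hx]
    _ = #(hatAddReps A s) * (#A - 2).choose (m - 2) := by rw [sum_const, smul_eq_mul]

variable {A s} in
theorem card_filter_powersetCard_pair_union_subset {x y : G} (hx : x ∈ hatAddReps A s)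
    (hy : y ∈ hatAddReps A s) (hm : 4 ≤ m) :
    #{C ∈ A.powersetCard m | {x, s - x} ∪ {y, s - y} ⊆ C} =
      if y ∈ ({x, s - x} : Finset G) then (#A - 2).choose (m - 2)
      else (#A - 4).choose (m - 4) := by
  have hsub : {x, s - x} ∪ {y, s - y} ⊆ A :=
    union_subset (pair_subset_of_mem_hatAddReps hx) (pair_subset_of_mem_hatAddReps hy)
  have hcard : #({x, s - x} ∪ {y, s - y} : Finset G) =
      if y ∈ ({x, s - x} : Finset G) then 2 else 4 := by
    split_ifs with hxy
    · rw [pair_sub_eq_of_mem hxy, union_self, card_pair_of_mem_hatAddReps hx]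
    · rw [card_union_of_disjoint (disjoint_pair_sub_of_notMem hxy),
        card_pair_of_mem_hatAddReps hx, card_pair_of_mem_hatAddReps hy]
  rw [card_filter_powersetCard_subset _ _ _ hsub (by split_ifs at hcard <;> omega), hcard]
  split_ifs <;> rfl

theorem sum_sq_card_hatAddReps_powersetCard_le (hm : 4 ≤ m) :
    ∑ C ∈ A.powersetCard m, #(hatAddReps C s) ^ 2 ≤
      #(hatAddReps A s) * (2 * (#A - 2).choose (m - 2) +
        #(hatAddReps A s) * (#A - 4).choose (m - 4)) := by
  set R := hatAddReps A s
  calc ∑ C ∈ A.powersetCard m, #(hatAddReps C s) ^ 2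
      = ∑ C ∈ A.powersetCard m, ∑ x ∈ R, ∑ y ∈ R,
          if {x, s - x} ∪ {y, s - y} ⊆ C then 1 else 0 :=
        sum_congr rfl fun C hC => by
          rw [hatAddReps_of_subset (mem_powersetCard.1 hC).1, card_filter, sq, sum_mul_sum]
          simp only [union_subset_iff, ite_zero_mul_ite_zero, mul_one, R]
    _ = ∑ x ∈ R, ∑ y ∈ R, #{C ∈ A.powersetCard m | {x, s - x} ∪ {y, s - y} ⊆ C} := by
        simp only [card_filter]
        rw [sum_comm]
        exact sum_congr rfl fun x _ => sum_comm
    _ ≤ ∑ x ∈ R, (2 * (#A - 2).choose (m - 2) + #R * (#A - 4).choose (m - 4)) := by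
        refine sum_le_sum fun x hx => ?_
        rw [sum_congr rfl fun y hy => card_filter_powersetCard_pair_union_subset hx hy hm,
          sum_ite, sum_const, sum_const, smul_eq_mul, smul_eq_mul]
        have : #{y ∈ R | y ∈ ({x, s - x} : Finset G)} ≤ 2 :=
          (card_le_card fun y hy => (mem_filter.1 hy).2).trans (card_le_two)
        gcongr
        exact filter_subset _ _
    _ = #R * (2 * (#A - 2).choose (m - 2) + #R * (#A - 4).choose (m - 4)) := by
        rw [sum_const, smul_eq_mul]

theorem card_filter_notMem_hatAdd_mul_le (hm : 4 ≤ m) (hmk : m ≤ #A) :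
    #{C ∈ A.powersetCard m | s ∉ hatAdd C} * #(hatAddReps A s) * (m * (m - 1)) ≤
      2 * (#A).choose m * (#A * (#A - 1)) := by
  set Z := #{C ∈ A.powersetCard m | s ∉ hatAdd C}
  set r := #(hatAddReps A s)
  set N := (#A).choose m
  set D₂ := (#A - 2).choose (m - 2)
  have hZ : Z = #{C ∈ A.powersetCard m | #(hatAddReps C s) = 0} := by
    simp only [Z, mem_hatAdd_iff_nonempty_hatAddReps, not_nonempty_iff_eq_empty, card_eq_zero]
  have moments : Z * (r * D₂) ^ 2 + N * (r * D₂) ^ 2 ≤ 2 * N ^ 2 * (r * D₂) + N * (r * D₂) ^ 2 :=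
    calc Z * (r * D₂) ^ 2 + N * (r * D₂) ^ 2
        ≤ N ^ 2 * ∑ C ∈ A.powersetCard m, #(hatAddReps C s) ^ 2 := by
          have := card_filter_eq_zero_mul_sq_add_le (A.powersetCard m) fun C => #(hatAddReps C s)
          rwa [← hZ, card_powersetCard, sum_card_hatAddReps_powersetCard A s (by omega)] at this
      _ ≤ N ^ 2 * (r * (2 * D₂ + r * (#A - 4).choose (m - 4))) :=
          Nat.mul_le_mul_left _ (sum_sq_card_hatAddReps_powersetCard_le A s hm)
      _ = 2 * N ^ 2 * (r * D₂) + N * r ^ 2 * (N * (#A - 4).choose (m - 4)) := by ring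
      _ ≤ 2 * N ^ 2 * (r * D₂) + N * r ^ 2 * D₂ ^ 2 := by
          gcongr; exact Nat.choose_mul_choose_sub_four_le_sq hm hmk
      _ = 2 * N ^ 2 * (r * D₂) + N * (r * D₂) ^ 2 := by ring
  have hZS : Z * (r * D₂) ≤ 2 * N ^ 2 := by
    rcases (r * D₂).eq_zero_or_pos with h | h
    · simp [h]
    exact Nat.le_of_mul_le_mul_right (by nlinarith) h
  refine Nat.le_of_mul_le_mul_right ?_ (Nat.choose_pos (show m - 2 ≤ #A - 2 by omega))
  calc Z * r * (m * (m - 1)) * D₂ = Z * (r * D₂) * (m * (m - 1)) := by ring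
    _ ≤ 2 * N ^ 2 * (m * (m - 1)) := Nat.mul_le_mul_right _ hZS
    _ = 2 * N * (#A * (#A - 1)) * D₂ := by
        rw [sq, mul_assoc 2, mul_assoc N, Nat.choose_mul_mul_sub_one (by omega)]; ring

theorem card_filter_notMem_hatAdd_le_choose_div (hm : 4 ≤ m) (hmk : m ≤ #A) (hAm : #A ≤ 8 * m)
    (hs : 4096 ≤ #(hatAddReps A s)) :
    #{C ∈ A.powersetCard m | s ∉ hatAdd C} ≤ (#A).choose m / 16 := by
  set Z := #{C ∈ A.powersetCard m | s ∉ hatAdd C}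
  have hA : #A * (#A - 1) ≤ 128 * (m * (m - 1)) :=
    calc #A * (#A - 1) ≤ 8 * m * (8 * m) := Nat.mul_le_mul hAm (by omega)
      _ ≤ 128 * (m * (m - 1)) := by
        obtain ⟨a, rfl⟩ : ∃ a, m = a + 1 := ⟨m - 1, by omega⟩
        simp only [Nat.add_sub_cancel]
        nlinarith
  have hZr : Z * #(hatAddReps A s) ≤ 256 * (#A).choose m := by
    refine Nat.le_of_mul_le_mul_right ?_ (show 0 < m * (m - 1) by apply Nat.mul_pos <;> omega)
    calc Z * #(hatAddReps A s) * (m * (m - 1)) ≤ 2 * (#A).choose m * (#A * (#A - 1)) :=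
          card_filter_notMem_hatAdd_mul_le A s hm hmk
      _ ≤ 2 * (#A).choose m * (128 * (m * (m - 1))) := Nat.mul_le_mul_left _ hA
      _ = 256 * (#A).choose m * (m * (m - 1)) := by ring
  rw [Nat.le_div_iff_mul_le (by norm_num)]
  nlinarith

end RestrictedSumset

/-- Every sufficiently large finite subset `A` of an abelian group contains a subset `C`
with `|C| ≥ |A|/8` and `|C +̂ C| ≥ 7|C|`. -/
theorem exists_subset_without_small_doubling :
    ∃ k₀ : ℕ, ∀ (G : Type u) [AddCommGroup G] [DecidableEq G] (A : Finset G),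
      k₀ ≤ A.card →
      ∃ C : Finset G, C ⊆ A ∧ A.card ≤ 8 * C.card ∧ 7 * C.card ≤ (hatAdd C).card := by
  refine ⟨500000, fun G _ _ A hA => ?_⟩
  by_cases hbig : 7 * #A ≤ #(hatAdd A)
  · exact ⟨A, subset_rfl, by omega, hbig⟩
  set m := (#A + 7) / 8
  have popular := card_sub_one_le_card_popularSums_add (T := 4096) (c := 7) (A := A) (by omega)
  obtain ⟨C, hC, hCsum⟩ := exists_mul_card_le_mul_card (p := 15) (q := 16)
    (powersetCard_nonempty.2 (by omega : m ≤ #A)) hatAdd (popularSums A 4096) fun s hs => by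
      have miss := card_filter_notMem_hatAdd_le_choose_div A s (m := m) (by omega) (by omega)
        (by omega) (mem_filter.1 hs).2
      have split := card_filter_add_card_filter_not (s := A.powersetCard m) fun C => s ∈ hatAdd C
      rw [card_powersetCard] at split ⊢
      omega
  obtain ⟨hCA, hCm⟩ := mem_powersetCard.1 hC
  -- `16 · 7m ≤ 14 (|A| + 7) ≤ 15 (|A| - 1 - 7 · 4096)` as soon as `|A| ≥ 430193`
  exact ⟨C, hCA, by omega, by omega⟩
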